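/- Let Br be a Bratteli diagram with potential F. Suppose ω is a state on the AF algebra AF(Br) such that for every j ≥ 1 its restriction to AF_j(Br) is given by ω|_{AF_j(Br)} = Σ_{v ∈ Br_j} ω(p^v_j) Tr_v(A_v · ), where A_v = (1/#M^v_j) Σ_{μ ∈ M^v_j} E^j_{μ,μ}. Then the vector sequence ((ω(p^v_j))_{v ∈ Br_j})_{j≥0} lies in the inverse limit lim_j (Δ_{Br_j}, \underline{Br}^{(j)}): that is, ω(p^v_j) = Σ_{w ∈ Br_{j+1}} \underline{Br}^{(j+1)}_{v,w} ω(p^w_{j+1}) for all j and v ∈ Br_j. -/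
import Mathlib


open scoped BigOperators

/-- A Bratteli diagram: finite nonempty level sets `V n`, arrows `E n` from level `n`
to level `n+1`, a single root at level `0`, no sinks, and no sources besides the root. -/
structure Bratteli where
  V : ℕ → Type
  E : ℕ → Type
  instVFin : ∀ n, Fintype (V n)
  instEFin : ∀ n, Fintype (E n)
  instVNe : ∀ n, Nonempty (V n)
  instRoot : Subsingleton (V 0)
  src : ∀ n, E n → V n
  rng : ∀ n, E n → V (n + 1)
  noSink : ∀ n (v : V n), ∃ e : E n, src n e = v
  noSource : ∀ n (v : V (n + 1)), ∃ e : E n, rng n e = v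

attribute [instance] Bratteli.instVFin Bratteli.instEFin Bratteli.instVNe Bratteli.instRoot

/-- Finite paths of length `n` starting at the root. -/
abbrev Bratteli.FinPath (B : Bratteli) (n : ℕ) :=
  { p : ∀ i : Fin n, B.E i.val //
    ∀ (i : ℕ) (h : i + 1 < n),
      B.rng i (p ⟨i, Nat.lt_of_succ_lt h⟩) = B.src (i + 1) (p ⟨i + 1, h⟩) }

/-- Infinite paths starting at the root. -/
structure Bratteli.InfPath (B : Bratteli) where
  arrow : ∀ n, B.E n
  compat : ∀ n, B.rng n (arrow n) = B.src (n + 1) (arrow (n + 1))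

/-- The initial segment `p[1,n]` of an infinite path. -/
def Bratteli.InfPath.take {B : Bratteli} (p : B.InfPath) (n : ℕ) : B.FinPath n :=
  ⟨fun i => p.arrow i.val, fun i _ => p.compat i⟩

/-- The endpoint (range) of a finite path of positive length. -/
def pend {B : Bratteli} {n : ℕ} (μ : B.FinPath (n + 1)) : B.V (n + 1) :=
  B.rng n (μ.1 ⟨n, Nat.lt_succ_self n⟩)

/-- The vertex at level `n` through which a path of length `n+1` passes. -/
def through {B : Bratteli} {n : ℕ} (μ : B.FinPath (n + 1)) : B.V n :=
  B.src n (μ.1 ⟨n, Nat.lt_succ_self n⟩)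

/-- The value `F(μ) = Σ_i F(a_i)` of a potential on a finite path. -/
noncomputable def pathVal {B : Bratteli} (F : ∀ n, B.E n → ℝ) {n : ℕ}
    (μ : B.FinPath n) : ℝ :=
  ∑ i : Fin n, F i.val (μ.1 i)

/-- An infinite path `p` from the root is an `F`-geodesic when for every `n`,
`F(p[1,n]) ≤ F(μ)` for every length-`n` path `μ` from the root with the same endpoint. -/
def IsGeodesic {B : Bratteli} (F : ∀ n, B.E n → ℝ) (p : B.InfPath) : Prop :=
  ∀ (n : ℕ) (μ : B.FinPath (n + 1)), pend μ = pend (p.take (n + 1)) →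
    pathVal F (p.take (n + 1)) ≤ pathVal F μ

open scoped Classical

/-- The left stochastic matrix `Br(β)^{(j)}` with entries
`(Σ_{μ ∈ P^w(v)} e^{−βF(μ)}) / (Σ_{ν ∈ P^w} e^{−βF(ν)})`, over paths of length `j+1`
from the root (so from level `j` to level `j+1` in the diagram). -/
noncomputable def stoch (B : Bratteli) (F : ∀ n, B.E n → ℝ) (β : ℝ) (j : ℕ) :
    Matrix (B.V j) (B.V (j + 1)) ℝ :=
  Matrix.of fun v w =>
    (∑ μ : {μ : B.FinPath (j + 1) // pend μ = w ∧ through μ = v},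
        Real.exp (-(β * pathVal F μ.1))) /
      ∑ μ : {μ : B.FinPath (j + 1) // pend μ = w}, Real.exp (-(β * pathVal F μ.1))

/-- The minimum `m_w` of the potential over paths from the root to `w`. -/
noncomputable def mmin (B : Bratteli) (F : ∀ n, B.E n → ℝ) (j : ℕ) (w : B.V (j + 1)) : ℝ :=
  sInf {x | ∃ μ : B.FinPath (j + 1), pend μ = w ∧ pathVal F μ = x}

/-- The limit matrix `\underline{Br}^{(j)}` with entries
`#{μ ∈ P^w(v) : F(μ) = m_w} / #{μ ∈ P^w : F(μ) = m_w}`. -/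
noncomputable def stochLim (B : Bratteli) (F : ∀ n, B.E n → ℝ) (j : ℕ) :
    Matrix (B.V j) (B.V (j + 1)) ℝ :=
  Matrix.of fun v w =>
    (Nat.card {μ : B.FinPath (j + 1) //
        pend μ = w ∧ through μ = v ∧ pathVal F μ = mmin B F j w} : ℝ) /
      (Nat.card {μ : B.FinPath (j + 1) // pend μ = w ∧ pathVal F μ = mmin B F j w} : ℝ)

/-- `ν` extends `μ`: the first `j` arrows of `ν` are those of `μ`. -/
def Extends {B : Bratteli} {j k : ℕ} (h : j ≤ k) (ν : B.FinPath k) (μ : B.FinPath j) : Prop :=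
  ∀ i : Fin j, ν.1 ⟨i.1, lt_of_lt_of_le i.2 h⟩ = μ.1 i

/-- Truncation of a path, dropping the last arrow. -/
def trunc {B : Bratteli} {n : ℕ} (ν : B.FinPath (n + 1)) : B.FinPath n :=
  ⟨fun i => ν.1 i.castSucc, fun i h => ν.2 i (Nat.lt_succ_of_lt h)⟩

lemma extends_trunc {B : Bratteli} {n : ℕ} (ν : B.FinPath (n + 1)) :
    Extends (Nat.le_succ n) ν (trunc ν) := fun _ => rfl

lemma trunc_eq_of_extends {B : Bratteli} {n : ℕ} {ν : B.FinPath (n + 1)} {μ : B.FinPath n}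
    (h : Extends (Nat.le_succ n) ν μ) : trunc ν = μ :=
  Subtype.ext (funext fun i => h i)

lemma pend_trunc {B : Bratteli} {n : ℕ} (ν : B.FinPath (n + 2)) :
    pend (trunc ν) = through ν :=
  ν.2 n (Nat.lt_succ_self (n + 1))

/-- If a state `ω` on `AF(Br)` restricts on each `AF_j(Br)` to
`Σ_v ω(p^v_j) Tr_v(A_v ·)` (values on diagonal matrix units recorded by `ω j μ`, and
`t j v = ω(p^v_j)`), then `(ω(p^v_j))_v` lies in the inverse limit along the matrices
`\underline{Br}^{(j)}`: `ω(p^v_j) = Σ_w \underline{Br}^{(j+1)}_{v,w} ω(p^w_{j+1})`. -/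
theorem stmt_14 (B : Bratteli) (F : ∀ n, B.E n → ℝ)
    (ω : ∀ j, B.FinPath j → ℝ) (t : ∀ j, B.V j → ℝ)
    (hnn : ∀ j μ, 0 ≤ ω j μ)
    (hcompat : ∀ (j : ℕ) (μ : B.FinPath j),
      ω j μ = ∑ ν : {ν : B.FinPath (j + 1) // Extends (Nat.le_succ j) ν μ}, ω (j + 1) ν.1)
    (ht : ∀ (j : ℕ) (v : B.V (j + 1)),
      t (j + 1) v = ∑ μ : {μ : B.FinPath (j + 1) // pend μ = v}, ω (j + 1) μ.1)
    (hform : ∀ (j : ℕ) (μ : B.FinPath (j + 1)),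
      ω (j + 1) μ = t (j + 1) (pend μ) *
        (if pathVal F μ = mmin B F j (pend μ) then (1 : ℝ) else 0) /
        (Nat.card {ν : B.FinPath (j + 1) //
          pend ν = pend μ ∧ pathVal F ν = mmin B F j (pend μ)} : ℝ)) :
    ∀ (j : ℕ) (v : B.V (j + 1)),
      t (j + 1) v = ∑ w : B.V (j + 2), stochLim B F (j + 1) v w * t (j + 2) w := by
  intro j v
  classical
  -- combine paths of length j+1 ending at v with their extensions
  let e : (Σ μ : {μ : B.FinPath (j + 1) // pend μ = v},
      {ν : B.FinPath (j + 2) // Extends (Nat.le_succ (j + 1)) ν μ.1}) ≃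
      {ν : B.FinPath (j + 2) // through ν = v} :=
    { toFun := fun p => ⟨p.2.1, by
        rw [← pend_trunc p.2.1, trunc_eq_of_extends p.2.2]; exact p.1.2⟩
      invFun := fun ν => ⟨⟨trunc ν.1, (pend_trunc ν.1).trans ν.2⟩, ⟨ν.1, extends_trunc ν.1⟩⟩
      left_inv := by
        rintro ⟨⟨μ, hμ⟩, ⟨ν, hν⟩⟩
        have h1 : trunc ν = μ := trunc_eq_of_extends hν
        subst h1
        rfl
      right_inv := fun ν => rfl }
  have step1 : t (j + 1) v =
      ∑ ν : {ν : B.FinPath (j + 2) // through ν = v}, ω (j + 2) ν.1 := by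
    rw [ht j v]
    simp_rw [hcompat (j + 1)]
    rw [← Fintype.sum_equiv e (fun p => ω (j + 2) p.2.1) (fun ν => ω (j + 2) ν.1)
      (fun p => rfl), ← Finset.univ_sigma_univ, Finset.sum_sigma]
  have step2 : ∀ w : B.V (j + 2),
      (∑ x : {x : {ν : B.FinPath (j + 2) // through ν = v} // pend x.1 = w},
        ω (j + 2) x.1.1) = stochLim B F (j + 1) v w * t (j + 2) w := by
    intro w
    let e2 : {x : {ν : B.FinPath (j + 2) // through ν = v} // pend x.1 = w} ≃
        {ν : B.FinPath (j + 2) // pend ν = w ∧ through ν = v} :=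
      { toFun := fun x => ⟨x.1.1, ⟨x.2, x.1.2⟩⟩
        invFun := fun ν => ⟨⟨ν.1, ν.2.2⟩, ν.2.1⟩
        left_inv := fun _ => rfl
        right_inv := fun _ => rfl }
    have h2 : (∑ x : {x : {ν : B.FinPath (j + 2) // through ν = v} // pend x.1 = w},
        ω (j + 2) x.1.1) = ∑ ν : {ν : B.FinPath (j + 2) // pend ν = w ∧ through ν = v},
        ω (j + 2) ν.1 := Fintype.sum_equiv e2 _ _ (fun x => rfl)
    rw [h2]
    have hterm : ∀ ν : {ν : B.FinPath (j + 2) // pend ν = w ∧ through ν = v},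
        ω (j + 2) ν.1 = if pathVal F ν.1 = mmin B F (j + 1) w then
          t (j + 2) w / (Nat.card {μ : B.FinPath (j + 2) //
            pend μ = w ∧ pathVal F μ = mmin B F (j + 1) w} : ℝ) else 0 := by
      intro ν
      rw [hform (j + 1) ν.1, ν.2.1]
      by_cases h : pathVal F ν.1 = mmin B F (j + 1) w
      · rw [if_pos h, if_pos h, mul_one]
      · rw [if_neg h, if_neg h, mul_zero, zero_div]
    rw [Finset.sum_congr rfl (fun ν _ => hterm ν), Finset.sum_ite, Finset.sum_const,
      Finset.sum_const_zero, add_zero, nsmul_eq_mul]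
    have hcard : ((Finset.univ.filter (fun ν : {ν : B.FinPath (j + 2) //
          pend ν = w ∧ through ν = v} => pathVal F ν.1 = mmin B F (j + 1) w)).card : ℝ)
        = (Nat.card {μ : B.FinPath (j + 2) //
          pend μ = w ∧ through μ = v ∧ pathVal F μ = mmin B F (j + 1) w} : ℝ) := by
      rw [← Fintype.card_subtype, ← Nat.card_eq_fintype_card]
      exact congrArg Nat.cast (Nat.card_congr
        { toFun := fun x => ⟨x.1.1, ⟨x.1.2.1, x.1.2.2, x.2⟩⟩
          invFun := fun μ => ⟨⟨μ.1, ⟨μ.2.1, μ.2.2.1⟩⟩, μ.2.2.2⟩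
          left_inv := fun _ => rfl
          right_inv := fun _ => rfl })
    rw [hcard]
    show _ = stochLim B F (j + 1) v w * t (j + 2) w
    rw [stochLim, Matrix.of_apply, div_mul_eq_mul_div, mul_div_assoc]
  rw [step1, ← Fintype.sum_fiberwise (fun ν : {ν : B.FinPath (j + 2) // through ν = v} =>
    pend ν.1) (fun ν => ω (j + 2) ν.1)]
  exact Finset.sum_congr rfl (fun w _ => step2 w)
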